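/- Let G be a finite group acting on a finite EI quiver (Q, U), where Q is acyclic. Then the induced G-action on the associated free EI category C(Q,U) is admissible: for any object i and g ∈ G with g(i) ≠ i, the set Hom_{C(Q,U)}(g(i), i) is empty. -/

import Mathlib

open Quiver

section

/- A finite EI quiver `(Q, U)`: a finite acyclic quiver `Q` (vertices `V`, arrows
`a ⟶ b`) together with a finite group `grp i = U(i)` for each vertex `i` and a
nonempty finite `(U(tα), U(sα))`-biset `bis α = U(α)` for each arrow `α`, with
left action `actL` and right action `actR`. -/
variable {V : Type} [Quiver.{1} V]
variable (grp : V → Type) (bis : ∀ a b : V, (a ⟶ b) → Type)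
variable (actL : ∀ (a b : V) (e : a ⟶ b), grp b → bis a b e → bis a b e)
variable (actR : ∀ (a b : V) (e : a ⟶ b), bis a b e → grp a → bis a b e)

/-- Decorated paths: an element of `U(α_n) × ⋯ × U(α_1)` along a path
(for the empty path at `i`, an element of `U(i)`). -/
inductive Dec : ∀ {i j : V}, Path i j → Type 1
  | nil (i : V) (u : grp i) : Dec (Path.nil (a := i))
  | cons {i b c : V} (p : Path i b) (e : b ⟶ c) (x : bis b c e) (d : Dec p) :
      Dec (p.cons e)

variable {grp bis}

/-- The left action of `U(j)` on decorated paths from `i` to `j`. -/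
def decAct [∀ v, Group (grp v)] {i j : V} {p : Path i j} (h : grp j)
    (d : Dec grp bis p) : Dec grp bis p :=
  match d with
  | Dec.nil i u => Dec.nil i (h * u)
  | Dec.cons p e x d => Dec.cons p e (actL _ _ e h x) d

/-- The relation defining the iterated biset product
`U(p) = U(α_n) ×_{U(tα_{n-1})} ⋯ ×_{U(tα_1)} U(α_1)` along a path `p`:
generated by `(x.h, d) ∼ (x, h.d)` and congruence. -/
inductive DecRel [∀ v, Group (grp v)] :
    ∀ {i j : V} {p : Path i j}, Dec grp bis p → Dec grp bis p → Prop
  | swap {i b c : V} (p : Path i b) (e : b ⟶ c) (x : bis b c e) (h : grp b)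
      (d : Dec grp bis p) :
      DecRel (.cons p e (actR b c e x h) d) (.cons p e x (decAct actL h d))
  | consCongr {i b c : V} (p : Path i b) (e : b ⟶ c) (x : bis b c e)
      {d d' : Dec grp bis p} :
      DecRel d d' → DecRel (.cons p e x d) (.cons p e x d')

variable (grp bis) in
/-- The Hom-set `Hom_{C(Q,U)}(i, j)` of the free EI category `C(Q, U)`: the
disjoint union, over all paths `p` from `i` to `j`, of the biset products
`U(p)`. -/
def EIHom [∀ v, Group (grp v)] (i j : V) : Type 1 :=
  Σ p : Path i j, Quot (fun d d' : Dec grp bis p => DecRel actL actR d d')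

/- In an acyclic quiver, reachability along paths is a partial order on the vertices, and a
prefunctor `F` is monotone for it. If `F i` reaches `i` then `F^[k+1] i` reaches `F^[k] i` for all
`k`; when `F^[n] i = i` this makes `i` reach `F i`, so `F i = i` by antisymmetry. For the action
of `g` in a finite group every vertex is periodic, with period dividing `orderOf g`. -/

namespace Quiver

theorem Path.eq_of_acyclic {W : Type*} [Quiver W]
    (hacyclic : ∀ (v : W) (p : Path v v), p.length = 0)
    {a b : W} (p : Path a b) (q : Path b a) : a = b := by
  refine p.eq_of_length_zero ?_
  have hloop := hacyclic a (p.comp q)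
  rw [Path.length_comp] at hloop
  omega

end Quiver

namespace Prefunctor

theorem nonempty_path_iterate_obj {W : Type*} [Quiver W] (F : W ⥤q W) {i : W}
    (p : Path (F.obj i) i) : ∀ n : ℕ, Nonempty (Path (F.obj^[n] i) i)
  | 0 => ⟨Path.nil⟩
  | n + 1 => by
    obtain ⟨q⟩ := nonempty_path_iterate_obj F p n
    rw [Function.iterate_succ_apply']
    exact ⟨(F.mapPath q).comp p⟩

theorem obj_eq_of_isPeriodicPt {W : Type*} [Quiver W]
    (hacyclic : ∀ (v : W) (p : Path v v), p.length = 0) (F : W ⥤q W) {n : ℕ} {i : W}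
    (hn : 0 < n) (hi : Function.IsPeriodicPt F.obj n i) (p : Path (F.obj i) i) : F.obj i = i := by
  obtain ⟨m, rfl⟩ := Nat.exists_eq_succ_of_ne_zero hn.ne'
  obtain ⟨q⟩ := nonempty_path_iterate_obj F (F.mapPath p) m
  rw [← Function.iterate_succ_apply, hi.eq] at q
  exact Path.eq_of_acyclic hacyclic p q

end Prefunctor

/-- let a finite group `G` act on a finite EI quiver `(Q, U)` (by EI
quiver automorphisms `(σ⁰, σ¹)`), with `Q` acyclic.  Then the induced `G`-action
on the free EI category `C(Q, U)` is admissible: if `g(i) ≠ i` then the Hom-set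
`Hom_{C(Q,U)}(g(i), i)` is empty. -/
theorem eiQuiver_action_admissible
    [∀ v, Group (grp v)]
    -- finiteness of the EI quiver
    [Finite V] [∀ a b : V, Finite (a ⟶ b)] [∀ v, Finite (grp v)]
    [∀ (a b : V) (e : a ⟶ b), Finite (bis a b e)]
    -- the bisets are nonempty
    (hne : ∀ (a b : V) (e : a ⟶ b), Nonempty (bis a b e))
    -- the action axioms making each `bis e` a `(grp b, grp a)`-biset
    (hL1 : ∀ (a b : V) (e : a ⟶ b) (x : bis a b e), actL a b e 1 x = x)
    (hLm : ∀ (a b : V) (e : a ⟶ b) (h h' : grp b) (x : bis a b e),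
      actL a b e (h * h') x = actL a b e h (actL a b e h' x))
    (hR1 : ∀ (a b : V) (e : a ⟶ b) (x : bis a b e), actR a b e x 1 = x)
    (hRm : ∀ (a b : V) (e : a ⟶ b) (x : bis a b e) (k k' : grp a),
      actR a b e x (k * k') = actR a b e (actR a b e x k) k')
    (hLR : ∀ (a b : V) (e : a ⟶ b) (h : grp b) (x : bis a b e) (k : grp a),
      actR a b e (actL a b e h x) k = actL a b e h (actR a b e x k))
    -- `Q` is acyclic
    (hacyclic : ∀ (v : V) (p : Path v v), p.length = 0)
    -- a `G`-action on the EI quiver `(Q,U)`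
    (G : Type) [Group G] [Finite G]
    (vObj : G → V → V)
    (vMap : ∀ (g : G) (a b : V), (a ⟶ b) → (vObj g a ⟶ vObj g b))
    (hvObj_one : ∀ v, vObj 1 v = v)
    (hvObj_mul : ∀ g h v, vObj (g * h) v = vObj g (vObj h v))
    (grpIso : ∀ (g : G) (v : V), grp v ≃* grp (vObj g v))
    (bisIso : ∀ (g : G) (a b : V) (e : a ⟶ b),
      bis a b e ≃ bis (vObj g a) (vObj g b) (vMap g a b e))
    (hbisL : ∀ (g : G) (a b : V) (e : a ⟶ b) (h : grp b) (x : bis a b e),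
      bisIso g a b e (actL a b e h x) =
        actL _ _ (vMap g a b e) (grpIso g b h) (bisIso g a b e x))
    (hbisR : ∀ (g : G) (a b : V) (e : a ⟶ b) (x : bis a b e) (k : grp a),
      bisIso g a b e (actR a b e x k) =
        actR _ _ (vMap g a b e) (bisIso g a b e x) (grpIso g a k))
    -- conclusion: admissibility
    (g : G) (i : V) (hgi : vObj g i ≠ i) :
    IsEmpty (EIHom grp bis actL actR (vObj g i) i) := by
  let _ : MulAction G V := { smul := vObj, one_smul := hvObj_one, mul_smul := hvObj_mul }
  let F : V ⥤q V := { obj := (g • ·), map := vMap g _ _ }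
  have hperiodic : Function.IsPeriodicPt F.obj (orderOf g) i :=
    MulAction.isPeriodicPt_smul_iff.mpr (by rw [pow_orderOf_eq_one, one_smul])
  exact ⟨fun ⟨p, _⟩ => hgi (F.obj_eq_of_isPeriodicPt hacyclic (orderOf_pos g) hperiodic p)⟩

end
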